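/- arXiv:2508.10490 — 2 statements merged into one kernel-verified Lean document; each statement's English description precedes it below -/
import Mathlib

section
/- Let n ≥ 1, let k : ℝ → ℂ be integrable and differentiable with integrable derivative k′, let x₁,…,xₙ ∈ ℝ and α₁,…,αₙ ∈ ℝ, and define f(x) = Σᵢ αᵢ·k(x − xᵢ). Then for every frequency ω ∈ ℝ, the squared magnitude of the Fourier transform of f′ satisfies ‖F{f′}(ω)‖² ≤ n · 4π²ω² · (Σᵢ αᵢ²) · ‖F{k}(ω)‖². -/
open Real MeasureTheory
open scoped FourierTransform

/-- Spectral decay of the input-gradient of a shift-invariant kernel expansion: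
for `f x = ∑ i, α i * k (x - x i)`, the power spectrum of `f'` is bounded by
`n * 4π²ω² * (∑ αᵢ²) * ‖k̂(ω)‖²`. -/
theorem gradient_kernel_expansion_spectral_decay
    (n : ℕ) (hn : 1 ≤ n) (k : ℝ → ℂ)
    (hk_int : Integrable k) (hk_diff : Differentiable ℝ k)
    (hk'_int : Integrable (deriv k))
    (x : Fin n → ℝ) (α : Fin n → ℝ)
    (f : ℝ → ℂ) (hf : ∀ y : ℝ, f y = ∑ i, (α i : ℂ) * k (y - x i))
    (ω : ℝ) :
    ‖𝓕 (deriv f) ω‖ ^ 2 ≤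
      (n : ℝ) * (4 * π ^ 2 * ω ^ 2) * (∑ i, (α i) ^ 2) * ‖𝓕 k ω‖ ^ 2 := by
  -- derivative of f
  have hterm : ∀ (i : Fin n) (y : ℝ),
      HasDerivAt (fun y => (α i : ℂ) * k (y - x i)) ((α i : ℂ) * deriv k (y - x i)) y := by
    intro i y
    have h1 : HasDerivAt (fun y : ℝ => y - x i) 1 y := (hasDerivAt_id y).sub_const (x i)
    have h2 := ((hk_diff (y - x i)).hasDerivAt).scomp y h1
    simpa using h2.const_mul ((α i : ℂ))
  have hfe : f = fun y => ∑ i, (α i : ℂ) * k (y - x i) := funext hf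
  have hf' : ∀ y, HasDerivAt f (∑ i, (α i : ℂ) * deriv k (y - x i)) y := by
    intro y
    rw [hfe]
    exact HasDerivAt.fun_sum (fun i _ => hterm i y)
  have hD : deriv f = fun y => ∑ i, (α i : ℂ) * deriv k (y - x i) :=
    funext fun y => (hf' y).deriv
  -- integrability of shifted derivatives
  have hgi : ∀ i : Fin n, Integrable (fun y => deriv k (y - x i)) :=
    fun i => hk'_int.comp_sub_right (x i)
  -- split Fourier integral
  have hsplit : 𝓕 (deriv f) ω = ∑ i, (α i : ℂ) • 𝓕 (fun y => deriv k (y - x i)) ω := by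
    rw [hD]
    have : 𝓕 (fun y => ∑ i, (α i : ℂ) * deriv k (y - x i)) ω
        = ∑ i, 𝓕 (fun y => (α i : ℂ) * deriv k (y - x i)) ω := by
      rw [Real.fourier_eq]
      simp_rw [Finset.smul_sum]
      rw [integral_finset_sum]
      · rfl
      · intro i _
        exact (Real.fourierIntegral_convergent_iff ω).2 ((hgi i).const_mul _)
    rw [this]
    refine Finset.sum_congr rfl fun i _ => ?_
    rw [Real.fourier_eq, Real.fourier_eq, ← integral_smul]
    congr 1
    ext v
    rw [smul_comm]
    rfl
  -- norm of shifted Fourier transform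
  have hnorm_shift : ∀ i : Fin n, ‖𝓕 (fun y => deriv k (y - x i)) ω‖ = ‖𝓕 (deriv k) ω‖ := by
    intro i
    have he : (fun y => deriv k (y - x i)) = (deriv k) ∘ (fun v => v + (-x i)) := by
      ext v; simp [sub_eq_add_neg]
    rw [he]
    have h2 := congrFun (VectorFourier.fourierIntegral_comp_add_right 𝐞 (volume : Measure ℝ)
      (innerₗ ℝ) (deriv k) (-x i)) ω
    rw [show 𝓕 ((deriv k) ∘ fun v => v + (-x i)) ω
        = VectorFourier.fourierIntegral 𝐞 volume (innerₗ ℝ) ((deriv k) ∘ fun v => v + (-x i)) ω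
        from rfl, h2, Circle.norm_smul]
    rfl
  -- Fourier of derivative of k
  have hkd : ‖𝓕 (deriv k) ω‖ = 2 * π * |ω| * ‖𝓕 k ω‖ := by
    rw [Real.fourier_deriv hk_int hk_diff hk'_int]
    simp only [norm_smul]
    rw [show (2 * (π:ℂ) * Complex.I * ω) = ((2*π:ℝ):ℂ) * Complex.I * ((ω:ℝ):ℂ) by push_cast; ring]
    simp [abs_of_nonneg pi_nonneg, mul_assoc]
  -- triangle inequality bound
  have hbound : ‖𝓕 (deriv f) ω‖ ≤ (∑ i, |α i|) * (2 * π * |ω| * ‖𝓕 k ω‖) := by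
    rw [hsplit]
    calc ‖∑ i, (α i : ℂ) • 𝓕 (fun y => deriv k (y - x i)) ω‖
        ≤ ∑ i, ‖(α i : ℂ) • 𝓕 (fun y => deriv k (y - x i)) ω‖ := norm_sum_le _ _
      _ = ∑ i, |α i| * (2 * π * |ω| * ‖𝓕 k ω‖) := by
          refine Finset.sum_congr rfl fun i _ => ?_
          rw [norm_smul, hnorm_shift i, hkd]
          simp [Real.norm_eq_abs]
      _ = (∑ i, |α i|) * (2 * π * |ω| * ‖𝓕 k ω‖) := by rw [← Finset.sum_mul]
  have hS : (∑ i, |α i|) ^ 2 ≤ (n : ℝ) * ∑ i, (α i) ^ 2 := by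
    have h := sq_sum_le_card_mul_sum_sq (s := (Finset.univ : Finset (Fin n)))
      (f := fun i => |α i|)
    simpa [sq_abs] using h
  have hsq : ‖𝓕 (deriv f) ω‖ ^ 2 ≤ ((∑ i, |α i|) * (2 * π * |ω| * ‖𝓕 k ω‖)) ^ 2 := by
    have h0 : (0:ℝ) ≤ ‖𝓕 (deriv f) ω‖ := norm_nonneg _
    exact pow_le_pow_left₀ h0 hbound 2
  have hrw : ((∑ i, |α i|) * (2 * π * |ω| * ‖𝓕 k ω‖)) ^ 2
      = (∑ i, |α i|) ^ 2 * (4 * π ^ 2 * ω ^ 2 * ‖𝓕 k ω‖ ^ 2) := by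
    rw [show ((∑ i, |α i|) * (2 * π * |ω| * ‖𝓕 k ω‖)) ^ 2
        = (∑ i, |α i|) ^ 2 * (4 * π ^ 2 * |ω| ^ 2 * ‖𝓕 k ω‖ ^ 2) by ring, sq_abs]
  calc ‖𝓕 (deriv f) ω‖ ^ 2
      ≤ (∑ i, |α i|) ^ 2 * (4 * π ^ 2 * ω ^ 2 * ‖𝓕 k ω‖ ^ 2) := by rw [← hrw]; exact hsq
    _ ≤ ((n : ℝ) * ∑ i, (α i) ^ 2) * (4 * π ^ 2 * ω ^ 2 * ‖𝓕 k ω‖ ^ 2) := by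
        apply mul_le_mul_of_nonneg_right hS
        positivity
    _ = (n : ℝ) * (4 * π ^ 2 * ω ^ 2) * (∑ i, (α i) ^ 2) * ‖𝓕 k ω‖ ^ 2 := by ring
end

section
/- For every β > 0 and every x ∈ ℝ, 0 ≤ ∫_ℝ max(x − t, 0)·√(β/(2π))·exp(−βt²/2) dt − max(x, 0) ≤ 1/√(2πβ). In particular, the Gaussian-smoothed ReLU converges uniformly on ℝ to ReLU as β → ∞. -/
open Real MeasureTheory Filter Set

private lemma relu_integrable (b : ℝ) (hb : 0 < b) (x : ℝ) :
    Integrable (fun t : ℝ => max (x - t) 0 * Real.exp (-b * t ^ 2)) := by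
  apply Integrable.mono'
    (((integrable_exp_neg_mul_sq hb).const_mul |x|).add (integrable_mul_exp_neg_mul_sq hb).abs)
  · exact (((continuous_const.sub continuous_id).max continuous_const).mul
      (Real.continuous_exp.comp (continuous_const.mul (continuous_pow 2)))).aestronglyMeasurable
  · filter_upwards with t
    have h1 : |max (x - t) 0| ≤ |x| + |t| := by
      rw [abs_of_nonneg (le_max_right _ _)]
      exact max_le ((le_abs_self _).trans (abs_sub x t)) (by positivity)
    calc ‖max (x - t) 0 * Real.exp (-b * t ^ 2)‖
        = |max (x - t) 0| * Real.exp (-b * t ^ 2) := by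
          rw [norm_mul, Real.norm_eq_abs, Real.norm_eq_abs, abs_of_pos (Real.exp_pos _)]
      _ ≤ (|x| + |t|) * Real.exp (-b * t ^ 2) :=
          mul_le_mul_of_nonneg_right h1 (Real.exp_pos _).le
      _ = |x| * Real.exp (-b * t ^ 2) + |t * Real.exp (-b * t ^ 2)| := by
          rw [abs_mul, abs_of_pos (Real.exp_pos _)] ; ring

private lemma relu_integrable' (b : ℝ) (hb : 0 < b) (x : ℝ) :
    Integrable (fun t : ℝ => max (t - x) 0 * Real.exp (-b * t ^ 2)) := by
  have h := (relu_integrable b hb (-x)).comp_neg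
  have : (fun t : ℝ => max (-x - -t) 0 * Real.exp (-b * (-t) ^ 2)) =
      fun t : ℝ => max (t - x) 0 * Real.exp (-b * t ^ 2) := by
    funext t; rw [neg_sq]; ring_nf
  rwa [this] at h

private lemma odd_int_zero (b : ℝ) :
    (∫ t : ℝ, t * Real.exp (-b * t ^ 2)) = 0 := by
  have h := integral_neg_eq_self (fun t : ℝ => t * Real.exp (-b * t ^ 2)) (volume : Measure ℝ)
  simp only [neg_sq, neg_mul] at h
  rw [integral_neg] at h
  have h2 : (∫ t : ℝ, t * Real.exp (-b * t ^ 2)) =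
      ∫ t : ℝ, t * Real.exp (-(b * t ^ 2)) := by simp only [neg_mul]
  rw [h2]
  linarith

private lemma int_Ioi_mul_exp (b : ℝ) (hb : 0 < b) :
    (∫ r in Ioi (0:ℝ), r * Real.exp (-b * r ^ 2)) = (2 * b)⁻¹ := by
  have hb' : (2 * b) ≠ 0 := by positivity
  have A : ∀ r : ℝ, HasDerivAt (fun y : ℝ => -(2 * b)⁻¹ * Real.exp (-b * y ^ 2))
      (r * Real.exp (-b * r ^ 2)) r := by
    intro r
    refine (((hasDerivAt_pow 2 r).const_mul (-b)).exp.const_mul (-(2 * b)⁻¹)).congr_deriv ?_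
    field_simp
    ring
  have B : Tendsto (fun y : ℝ => -(2 * b)⁻¹ * Real.exp (-b * y ^ 2)) atTop
      (nhds (-(2 * b)⁻¹ * 0)) := by
    refine Tendsto.const_mul _ ?_
    refine Real.tendsto_exp_atBot.comp ?_
    exact (tendsto_pow_atTop two_ne_zero).const_mul_atTop_of_neg (neg_lt_zero.2 hb)
  have h := integral_Ioi_of_hasDerivAt_of_tendsto' (a := 0) (fun r _ => A r)
    (integrable_mul_exp_neg_mul_sq hb).integrableOn B
  rw [h]
  norm_num

private lemma int_relu0 (b : ℝ) (hb : 0 < b) :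
    (∫ t : ℝ, max t 0 * Real.exp (-b * t ^ 2)) = (2 * b)⁻¹ := by
  have h : (fun t : ℝ => max t 0 * Real.exp (-b * t ^ 2)) =
      (Ioi (0:ℝ)).indicator (fun t => t * Real.exp (-b * t ^ 2)) := by
    funext t
    rcases lt_or_ge 0 t with ht | ht
    · rw [Set.indicator_of_mem (Set.mem_Ioi.mpr ht), max_eq_left ht.le]
    · rw [Set.indicator_of_notMem (by simpa using not_lt.mpr ht), max_eq_right ht, zero_mul]
  rw [h, integral_indicator measurableSet_Ioi, int_Ioi_mul_exp b hb]

private lemma sqrt_alg (β : ℝ) (hβ : 0 < β) :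
    Real.sqrt (β / (2 * π)) * β⁻¹ = 1 / Real.sqrt (2 * π * β) := by
  have hπ : (0:ℝ) < 2 * π := by positivity
  have h1 : Real.sqrt (2 * π * β) = Real.sqrt (2 * π) * Real.sqrt β :=
    Real.sqrt_mul hπ.le β
  have h2 : Real.sqrt (β / (2 * π)) = Real.sqrt β / Real.sqrt (2 * π) := by
    rw [Real.sqrt_div hβ.le]
  have hb2 : Real.sqrt β * Real.sqrt β = β := Real.mul_self_sqrt hβ.le
  have hbpos : 0 < Real.sqrt β := Real.sqrt_pos.mpr hβ
  have hppos : 0 < Real.sqrt (2 * π) := Real.sqrt_pos.mpr hπ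
  rw [h1, h2]
  have e : (Real.sqrt β / Real.sqrt (2 * π) * β⁻¹) *
      (Real.sqrt (2 * π) * Real.sqrt β) = 1 := by
    field_simp
    linear_combination hb2
  exact eq_one_div_of_mul_eq_one_left e

/-- The Gaussian-smoothed ReLU dominates ReLU, with gap at most `1/√(2πβ)`;
in particular it converges uniformly to ReLU as `β → ∞`. -/
theorem gaussian_smoothed_relu_bounds_and_uniform_limit :
    (∀ β : ℝ, 0 < β → ∀ x : ℝ,
      0 ≤ (∫ t : ℝ, max (x - t) 0 *
          (Real.sqrt (β / (2 * π)) * Real.exp (-β * t ^ 2 / 2))) - max x 0 ∧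
      (∫ t : ℝ, max (x - t) 0 *
          (Real.sqrt (β / (2 * π)) * Real.exp (-β * t ^ 2 / 2))) - max x 0 ≤
        1 / Real.sqrt (2 * π * β)) ∧
    TendstoUniformly
      (fun (β : ℝ) (x : ℝ) => ∫ t : ℝ, max (x - t) 0 *
        (Real.sqrt (β / (2 * π)) * Real.exp (-β * t ^ 2 / 2)))
      (fun x : ℝ => max x 0) atTop := by
  have key : ∀ β : ℝ, 0 < β → ∀ x : ℝ,
      0 ≤ (∫ t : ℝ, max (x - t) 0 *
          (Real.sqrt (β / (2 * π)) * Real.exp (-β * t ^ 2 / 2))) - max x 0 ∧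
      (∫ t : ℝ, max (x - t) 0 *
          (Real.sqrt (β / (2 * π)) * Real.exp (-β * t ^ 2 / 2))) - max x 0 ≤
        1 / Real.sqrt (2 * π * β) := by
    intro β hβ x
    have hb : 0 < β / 2 := by positivity
    set b : ℝ := β / 2 with hbdef
    set c : ℝ := Real.sqrt (β / (2 * π)) with hcdef
    have hc : 0 ≤ c := Real.sqrt_nonneg _
    -- rewrite the integral
    have hrw : ∀ y : ℝ, (∫ t : ℝ, max (y - t) 0 *
        (c * Real.exp (-β * t ^ 2 / 2))) =
        c * ∫ t : ℝ, max (y - t) 0 * Real.exp (-b * t ^ 2) := by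
      intro y
      rw [← integral_const_mul]
      congr 1; funext t
      have : Real.exp (-β * t ^ 2 / 2) = Real.exp (-b * t ^ 2) := by
        rw [hbdef]; ring_nf
      rw [this]; ring
    -- the decomposition
    have hsplit : ∀ y : ℝ, (∫ t : ℝ, max (y - t) 0 * Real.exp (-b * t ^ 2)) =
        y * Real.sqrt (π / b) + ∫ t : ℝ, max (t - y) 0 * Real.exp (-b * t ^ 2) := by
      intro y
      have hfun : (fun t : ℝ => max (y - t) 0 * Real.exp (-b * t ^ 2)) =
          fun t : ℝ => (y * Real.exp (-b * t ^ 2) - t * Real.exp (-b * t ^ 2)) +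
            max (t - y) 0 * Real.exp (-b * t ^ 2) := by
        funext t
        have hmax : max (y - t) 0 = (y - t) + max (t - y) 0 := by
          rcases le_total t y with h | h
          · rw [max_eq_left (by linarith), max_eq_right (by linarith)]; ring
          · rw [max_eq_right (by linarith), max_eq_left (by linarith)]; ring
        rw [hmax]; ring
      have hf1 : Integrable (fun t : ℝ => y * Real.exp (-b * t ^ 2)) :=
        (integrable_exp_neg_mul_sq hb).const_mul y
      have hf2 : Integrable (fun t : ℝ => t * Real.exp (-b * t ^ 2)) :=
        integrable_mul_exp_neg_mul_sq hb
      have hf : Integrable (fun t : ℝ => y * Real.exp (-b * t ^ 2) -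
          t * Real.exp (-b * t ^ 2)) := hf1.sub hf2
      rw [hfun, integral_add hf (relu_integrable' b hb y),
        integral_sub hf1 hf2, integral_const_mul, integral_gaussian, odd_int_zero]
      ring
    have hcs : c * Real.sqrt (π / b) = 1 := by
      rw [hcdef, ← Real.sqrt_mul (by positivity)]
      rw [show β / (2 * π) * (π / b) = 1 by
        rw [hbdef]; field_simp]
      exact Real.sqrt_one
    have h2b : ((2:ℝ) * b)⁻¹ = β⁻¹ := by rw [hbdef]; norm_num
    have hbound : c * β⁻¹ = 1 / Real.sqrt (2 * π * β) := sqrt_alg β hβ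
    rw [hrw x]
    rcases le_or_gt 0 x with hx | hx
    · -- x ≥ 0
      set H : ℝ := ∫ t : ℝ, max (t - x) 0 * Real.exp (-b * t ^ 2) with hHdef
      rw [max_eq_left hx, hsplit x]
      have hid : c * (x * Real.sqrt (π / b) + H) = x + c * H := by
        rw [mul_add, ← mul_assoc, mul_comm c x, mul_assoc, hcs, mul_one]
      rw [hid]
      have hh0 : (0:ℝ) ≤ H :=
        integral_nonneg fun t => mul_nonneg (le_max_right _ _) (Real.exp_pos _).le
      have hmono : H ≤ ∫ t : ℝ, max t 0 * Real.exp (-b * t ^ 2) := by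
        rw [hHdef]
        apply integral_mono (relu_integrable' b hb x)
        · have := relu_integrable' b hb 0
          simpa using this
        · intro t
          exact mul_le_mul_of_nonneg_right
            (max_le_max (by linarith) le_rfl) (Real.exp_pos _).le
      constructor
      · nlinarith
      · have h3 : c * H ≤ c * β⁻¹ := by
          apply mul_le_mul_of_nonneg_left _ hc
          rw [← h2b, ← int_relu0 b hb]; exact hmono
        rw [hbound] at h3
        linarith
    · -- x < 0
      rw [max_eq_right hx.le, sub_zero]
      have hJnn : (0:ℝ) ≤ ∫ t : ℝ, max (x - t) 0 * Real.exp (-b * t ^ 2) :=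
        integral_nonneg fun t => mul_nonneg (le_max_right _ _) (Real.exp_pos _).le
      have hmono : (∫ t : ℝ, max (x - t) 0 * Real.exp (-b * t ^ 2)) ≤
          ∫ t : ℝ, max (0 - t) 0 * Real.exp (-b * t ^ 2) := by
        apply integral_mono (relu_integrable b hb x) (relu_integrable b hb 0)
        intro t
        exact mul_le_mul_of_nonneg_right
          (max_le_max (by linarith) le_rfl) (Real.exp_pos _).le
      have hJ0 : (∫ t : ℝ, max (0 - t) 0 * Real.exp (-b * t ^ 2)) = β⁻¹ := by
        rw [hsplit 0]
        have h0 : (∫ t : ℝ, max (t - 0) 0 * Real.exp (-b * t ^ 2)) =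
            ∫ t : ℝ, max t 0 * Real.exp (-b * t ^ 2) := by
          congr 1; funext t; rw [sub_zero]
        rw [h0, int_relu0 b hb, h2b, zero_mul, zero_add]
      refine ⟨mul_nonneg hc hJnn, ?_⟩
      calc c * ∫ t : ℝ, max (x - t) 0 * Real.exp (-b * t ^ 2)
          ≤ c * ∫ t : ℝ, max (0 - t) 0 * Real.exp (-b * t ^ 2) :=
            mul_le_mul_of_nonneg_left hmono hc
        _ = c * β⁻¹ := by rw [hJ0]
        _ = 1 / Real.sqrt (2 * π * β) := hbound
  refine ⟨key, ?_⟩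
  rw [Metric.tendstoUniformly_iff]
  intro ε hε
  have hsq : Tendsto Real.sqrt atTop atTop := by
    rw [show Real.sqrt = fun x : ℝ => x ^ (1/2 : ℝ) from funext fun x => Real.sqrt_eq_rpow x]
    exact tendsto_rpow_atTop (by norm_num)
  have h1 : Tendsto (fun β : ℝ => 1 / Real.sqrt (2 * π * β)) atTop (nhds 0) := by
    simp only [one_div]
    refine tendsto_inv_atTop_zero.comp (hsq.comp ?_)
    exact Tendsto.const_mul_atTop (by positivity) tendsto_id
  filter_upwards [h1.eventually_lt_const hε, eventually_gt_atTop 0] with β hβε hβ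
  intro x
  obtain ⟨hge, hle⟩ := key β hβ x
  rw [Real.dist_eq, abs_sub_comm, abs_of_nonneg hge]
  exact lt_of_le_of_lt hle hβε
end
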